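/- Let N ≥ 2, k ∈ ℝ, α ≥ −1, σ ∈ ℝ, p > 1. Let ζ ∈ C_c^∞(ℝ) with ζ ≥ 0, ζ ≢ 0, supp(ζ) ⊂ (0,1), and for T > 0, ℓ > 0 set ι(t) = ζ(t/T)^ℓ. Let {ξ_R} be a family of smooth cutoffs with 0 ≤ ξ_R ≤ 1, ξ_R ≡ 1 on B_R, supp(ξ_R) ⊂ B_{2R}, and let {η_R} be a family of smooth cutoffs with 0 ≤ η_R ≤ 1, η_R ≡ 1 on B_{√R}, supp(η_R) ⊂ B_R. Define 𝒟(x) = |x|^k (1 − |x|^{2−N−k}) if k > 2 − N, 𝒟(x) = |x|^{2−N} (1 − |x|^{k−2+N}) if k < 2 − N, 𝒟(x) = |x|^{2−N} ln|x| if k = 2 − N, and set ψ(t,x) = ι(t) 𝒟(x) ξ_R(x)^ℓ, ψ*(t,x) = ι(t) 𝒟(x) η_R(x)^ℓ on Ω. Then for each μ ∈ {ψ, ψ*}, for all sufficiently large ℓ there exists a constant C > 0 independent of T and R such that for all sufficiently large T and R, I₁(μ) ≤ C T^{1 − (α+p)/(p−1)} · A(R), where A(R) = ln R + R^{N + k −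 σ/(p−1)} if k > 2 − N, A(R) = R^{2 − σ/(p−1)} + ln R if k < 2 − N, and A(R) = (ln R)(R^{2 − σ/(p−1)} + ln R) if k = 2 − N. -/

import Mathlib

open MeasureTheory Metric Set Function

noncomputable section

abbrev Euc (N : ℕ) : Type := EuclideanSpace ℝ (Fin N)

/-- The Laplacian of `g : Euc N → ℝ` at `x`, as the sum of second directional derivatives
along the standard orthonormal basis. -/
def lapl (N : ℕ) (g : Euc N → ℝ) (x : Euc N) : ℝ :=
  ∑ i : Fin N, fderiv ℝ (fun y => fderiv ℝ g y (EuclideanSpace.single i 1)) x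
    (EuclideanSpace.single i 1)

/-- The divergence of a vector field `V : Euc N → Euc N` at `x`. -/
def diverg {N : ℕ} (V : Euc N → Euc N) (x : Euc N) : ℝ :=
  ∑ i : Fin N, fderiv ℝ V x (EuclideanSpace.single i 1) i

/-- The operator `L_k v = Δ v − k div(v x/|x|²)`. -/
def Lk (N : ℕ) (k : ℝ) (v : Euc N → ℝ) (x : Euc N) : ℝ :=
  lapl N v x - k * diverg (fun y => (v y / ‖y‖ ^ 2) • y) x
/-- The exterior domain `B₁ᶜ`. -/
def extDom (N : ℕ) : Set (Euc N) := (ball (0 : Euc N) 1)ᶜ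

/-- `Ω = (0,∞) × B₁ᶜ`. -/
def OmegaSet (N : ℕ) : Set (ℝ × Euc N) := Ioi (0 : ℝ) ×ˢ extDom N

/-- Time derivative `∂_t μ`. -/
def dtD {N : ℕ} (μ : ℝ × Euc N → ℝ) (z : ℝ × Euc N) : ℝ :=
  deriv (fun s => μ (s, z.2)) z.1

open scoped ENNReal

/-- `I₁(μ) = ∫_Ω t^{−α/(p−1)} |x|^{−σ/(p−1)} μ^{−1/(p−1)} |∂_t μ|^{p/(p−1)} dx dt`,
as a lower integral (the integrand vanishes wherever `μ = 0`, by the convention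
`0 ^ r = 0` for `r ≠ 0`). -/
def I1 (N : ℕ) (α σ p : ℝ) (μ : ℝ × Euc N → ℝ) : ℝ≥0∞ :=
  ∫⁻ z in OmegaSet N, ENNReal.ofReal
    (z.1 ^ (-α / (p - 1)) * ‖z.2‖ ^ (-σ / (p - 1)) * μ z ^ (-1 / (p - 1))
      * |dtD μ z| ^ (p / (p - 1)))

/-- `I₂(μ) = ∫_Ω t^{−α/(p−1)} |x|^{−σ/(p−1)} μ^{−1/(p−1)} |L_k μ|^{p/(p−1)} dx dt`,
as a lower integral (the integrand vanishes wherever `μ = 0`). -/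
def I2 (N : ℕ) (k α σ p : ℝ) (μ : ℝ × Euc N → ℝ) : ℝ≥0∞ :=
  ∫⁻ z in OmegaSet N, ENNReal.ofReal
    (z.1 ^ (-α / (p - 1)) * ‖z.2‖ ^ (-σ / (p - 1)) * μ z ^ (-1 / (p - 1))
      * |Lk N k (fun y => μ (z.1, y)) z.2| ^ (p / (p - 1)))

/-- `ι(t) = ζ(t/T)^ℓ`. -/
def iota (ζ : ℝ → ℝ) (T ℓ t : ℝ) : ℝ := ζ (t / T) ^ ℓ

/-- `𝒩(x) = |x|^k`. -/
def Nfun (N : ℕ) (k : ℝ) (x : Euc N) : ℝ := ‖x‖ ^ k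

/-- The function `𝒟` on the exterior domain. -/
def Dfun (N : ℕ) (k : ℝ) (x : Euc N) : ℝ :=
  if 2 - (N : ℝ) < k then ‖x‖ ^ k * (1 - ‖x‖ ^ (2 - (N : ℝ) - k))
  else if k < 2 - (N : ℝ) then ‖x‖ ^ (2 - (N : ℝ)) * (1 - ‖x‖ ^ (k - 2 + (N : ℝ)))
  else ‖x‖ ^ (2 - (N : ℝ)) * Real.log ‖x‖

/-- `ζ ∈ C_c^∞(ℝ)`, `ζ ≥ 0`, `ζ ≢ 0`, `supp ζ ⊆ (0,1)`. -/
structure IsZeta (ζ : ℝ → ℝ) : Prop where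
  smooth : ContDiff ℝ (⊤ : ℕ∞) ζ
  nonneg : ∀ s, 0 ≤ ζ s
  ne_zero : ζ ≠ 0
  supp : tsupport ζ ⊆ Ioo (0 : ℝ) 1

/-- A family of smooth cutoffs `ξ_R` with `0 ≤ ξ_R ≤ 1`, `ξ_R ≡ 1` on `B_R` and
`supp ξ_R ⊆ B_{2R}`. -/
structure IsXiFamily (N : ℕ) (ξ : ℝ → Euc N → ℝ) : Prop where
  smooth : ∀ R : ℝ, ContDiff ℝ (⊤ : ℕ∞) (ξ R)
  mem_Icc : ∀ (R : ℝ) (x : Euc N), ξ R x ∈ Icc (0 : ℝ) 1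
  eq_one : ∀ R : ℝ, 1 < R → ∀ x ∈ ball (0 : Euc N) R, ξ R x = 1
  supp : ∀ R : ℝ, 1 < R → Function.support (ξ R) ⊆ ball (0 : Euc N) (2 * R)

/-- A `ξ`-family with in addition `|∇ξ_R| ≤ C₀ R⁻¹` and `|Δξ_R| ≤ C₀ R⁻²`. -/
structure IsXiFamilyBnd (N : ℕ) (ξ : ℝ → Euc N → ℝ) (C₀ : ℝ)
    extends IsXiFamily N ξ : Prop where
  grad_bound : ∀ R : ℝ, 1 < R → ∀ x : Euc N, ‖gradient (ξ R) x‖ ≤ C₀ / R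
  lapl_bound : ∀ R : ℝ, 1 < R → ∀ x : Euc N, |lapl N (ξ R) x| ≤ C₀ / R ^ 2

/-- A family of smooth cutoffs `η_R` with `0 ≤ η_R ≤ 1`, `η_R ≡ 1` on `B_√R` and
`supp η_R ⊆ B_R`. -/
structure IsEtaFamily (N : ℕ) (η : ℝ → Euc N → ℝ) : Prop where
  smooth : ∀ R : ℝ, ContDiff ℝ (⊤ : ℕ∞) (η R)
  mem_Icc : ∀ (R : ℝ) (x : Euc N), η R x ∈ Icc (0 : ℝ) 1
  eq_one : ∀ R : ℝ, 1 < R → ∀ x ∈ ball (0 : Euc N) (Real.sqrt R), η R x = 1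
  supp : ∀ R : ℝ, 1 < R → Function.support (η R) ⊆ ball (0 : Euc N) R

/-- An `η`-family with in addition `|∇η_R(x)| ≤ C₀/(|x| ln R)` and
`|Δη_R(x)| ≤ C₀/(|x|² ln R)` on the annulus `√R < |x| < R`. -/
structure IsEtaFamilyBnd (N : ℕ) (η : ℝ → Euc N → ℝ) (C₀ : ℝ)
    extends IsEtaFamily N η : Prop where
  grad_bound : ∀ R : ℝ, 1 < R → ∀ x : Euc N, Real.sqrt R < ‖x‖ → ‖x‖ < R →
    ‖gradient (η R) x‖ ≤ C₀ / (‖x‖ * Real.log R)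
  lapl_bound : ∀ R : ℝ, 1 < R → ∀ x : Euc N, Real.sqrt R < ‖x‖ → ‖x‖ < R →
    |lapl N (η R) x| ≤ C₀ / (‖x‖ ^ 2 * Real.log R)
/-- The weight `A(R)` of Lemma 2.9. -/
def Aweight (N : ℕ) (k σ p R : ℝ) : ℝ :=
  if 2 - (N : ℝ) < k then Real.log R + R ^ ((N : ℝ) + k - σ / (p - 1))
  else if k < 2 - (N : ℝ) then R ^ (2 - σ / (p - 1)) + Real.log R
  else Real.log R * (R ^ (2 - σ / (p - 1)) + Real.log R)

/-!
Write `a = -α/(p-1)`, `b = -σ/(p-1)`, `c = -1/(p-1)`, `d = p/(p-1)`. Since `c + d = 1`, for a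
separated test function `μ(t,x) = ι(t) F(x)` with `F ≥ 0` the integrand of `I₁` splits as
`(t^a ι^c |ι'|^d) · (|x|^b F)` and, by Tonelli, `I₁(μ)` is a product of a time integral and a
space integral.

For `ι(t) = ζ(t/T)^ℓ` the time weight equals `ℓ^d T^(a-d)` times the bounded function
`s^a ζ(s)^(ℓ-d) |ζ'(s)|^d` at `s = t/T` (this needs `ℓ > d`), and it vanishes unless `t < T`;
hence the time integral is `O(T^(a-d+1)) = O(T^(1-(α+p)/(p-1)))`.

For the space integral, `0 ≤ 𝒟(x) ≤ L(ρ) |x|^max(k, 2-N)` on `1 ≤ |x| ≤ ρ`, where `L = ln`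
in the critical case `k = 2 - N` and `L = 1` otherwise. Polar coordinates reduce the integral
over `1 ≤ |x| < 2R` to `∫₁^{2R} r^(β-1) dr ≤ (1 + 1/|β|) (ln 2R + (2R)^β)`, which is `O(A(R))`.
-/

/-- The hypothesis `exp 1 ≤ ρ` gives `1 ≤ log ρ`, which absorbs the constant `1/|β|`
when `β < 0`. -/
lemma integral_Ioo_rpow_sub_one_le {β ρ : ℝ} (hρ : Real.exp 1 ≤ ρ) :
    ∫ y in Ioo 1 ρ, y ^ (β - 1) ≤ (1 + |β|⁻¹) * (Real.log ρ + ρ ^ β) := by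
  have hρ1 : 1 ≤ ρ := (Real.one_le_exp zero_le_one).trans hρ
  have hlog : 1 ≤ Real.log ρ := by rwa [Real.le_log_iff_exp_le (by linarith)]
  have hρβ : 0 ≤ ρ ^ β := Real.rpow_nonneg (by linarith) β
  have h0 : (0 : ℝ) ∉ uIcc 1 ρ := by simp [uIcc_of_le hρ1]
  rw [← integral_Ioc_eq_integral_Ioo, ← intervalIntegral.integral_of_le hρ1]
  rcases lt_trichotomy β 0 with hβ | rfl | hβ
  · rw [integral_rpow (Or.inr ⟨by linarith, h0⟩), sub_add_cancel, Real.one_rpow,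
      abs_of_neg hβ]
    have : (ρ ^ β - 1) / β ≤ (-β)⁻¹ := by
      rw [div_le_iff_of_neg hβ, inv_mul_eq_div, div_neg, div_self hβ.ne]
      linarith
    have : 0 < (-β)⁻¹ := by simpa using hβ
    nlinarith
  · simp only [zero_sub, Real.rpow_neg_one, integral_inv h0, div_one, abs_zero, inv_zero,
      Real.rpow_zero]
    linarith
  · rw [integral_rpow (Or.inr ⟨by linarith, h0⟩), sub_add_cancel, Real.one_rpow,
      abs_of_pos hβ]
    have : (ρ ^ β - 1) / β ≤ β⁻¹ * ρ ^ β := by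
      rw [div_le_iff₀ hβ, inv_mul_eq_div, div_mul_cancel₀ _ hβ.ne']
      linarith
    have : 0 ≤ β⁻¹ := by positivity
    nlinarith

section Radial

variable {E : Type*} [NormedAddCommGroup E] [NormedSpace ℝ E] [FiniteDimensional ℝ E]
  [MeasurableSpace E] [BorelSpace E] [Nontrivial E] (μ : Measure E) [μ.IsAddHaarMeasure]

open Module in
lemma lintegral_indicator_rpow_norm_le {γ ρ : ℝ} (hρ : Real.exp 1 ≤ ρ) :
    ∫⁻ x, ENNReal.ofReal ((Ico 1 ρ).indicator (· ^ γ) ‖x‖) ∂μ ≤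
      ENNReal.ofReal (finrank ℝ E * μ.real (ball 0 1) * (1 + |finrank ℝ E + γ|⁻¹) *
        (Real.log ρ + ρ ^ ((finrank ℝ E : ℝ) + γ))) := by
  set f : ℝ → ℝ := (Ico 1 ρ).indicator (· ^ γ)
  have hf0 : ∀ y, 0 ≤ f y :=
    indicator_nonneg fun y hy => Real.rpow_nonneg (by linarith [hy.1]) γ
  have hpolar : (fun y : ℝ => y ^ (finrank ℝ E - 1) • f y) =
      (Ico 1 ρ).indicator (· ^ ((finrank ℝ E : ℝ) + γ - 1)) := by
    ext y
    by_cases hy : y ∈ Ico 1 ρ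
    · simp only [f, indicator_of_mem hy, smul_eq_mul]
      rw [← Real.rpow_natCast, Nat.cast_pred finrank_pos, ← Real.rpow_add (by linarith [hy.1])]
      ring_nf
    · simp [f, hy]
  have hIco : Ico 1 ρ ∩ Ioi 0 = Ico 1 ρ :=
    inter_eq_left.2 fun y hy => mem_Ioi.2 (by linarith [hy.1])
  have hint : Integrable (fun x => f ‖x‖) μ := by
    rw [integrable_fun_norm_addHaar μ, hpolar, integrableOn_indicator_iff measurableSet_Ico, hIco]
    refine (ContinuousOn.integrableOn_Icc ?_).mono_set Ico_subset_Icc_self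
    exact continuousOn_id.rpow_const fun y hy => Or.inl (show y ≠ 0 by linarith [hy.1])
  rw [← ofReal_integral_eq_lintegral_ofReal hint (ae_of_all _ fun x => hf0 _)]
  refine ENNReal.ofReal_le_ofReal ?_
  rw [integral_fun_norm_addHaar μ, hpolar, setIntegral_indicator measurableSet_Ico, inter_comm,
    hIco, integral_Ico_eq_integral_Ioo, nsmul_eq_mul, smul_eq_mul, ← mul_assoc,
    mul_assoc _ _ (_ + _)]
  have := integral_Ioo_rpow_sub_one_le (β := finrank ℝ E + γ) hρ
  gcongr

end Radial

def logCorrection (N : ℕ) (k r : ℝ) : ℝ := if k = 2 - N then Real.log r else 1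

lemma logCorrection_nonneg (N : ℕ) (k : ℝ) {r : ℝ} (hr : 1 ≤ r) : 0 ≤ logCorrection N k r := by
  unfold logCorrection
  split_ifs
  exacts [Real.log_nonneg hr, zero_le_one]

lemma Aweight_eq (N : ℕ) (k σ p R : ℝ) :
    Aweight N k σ p R =
      logCorrection N k R * (Real.log R + R ^ (N + max k (2 - N) - σ / (p - 1))) := by
  unfold Aweight logCorrection
  rcases lt_trichotomy k (2 - N) with hk | rfl | hk
  · rw [if_neg hk.not_gt, if_pos hk, if_neg hk.ne, max_eq_right hk.le, one_mul, add_sub_cancel,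
      add_comm]
  · simp [add_comm]
  · rw [if_pos hk, if_neg hk.ne', max_eq_left hk.le, one_mul]

lemma Dfun_nonneg (N : ℕ) (k : ℝ) {x : Euc N} (hx : 1 ≤ ‖x‖) : 0 ≤ Dfun N k x := by
  have hpow (e : ℝ) (he : e ≤ 0) : ‖x‖ ^ e ≤ 1 := Real.rpow_le_one_of_one_le_of_nonpos hx he
  unfold Dfun
  split_ifs with h₁ h₂
  · exact mul_nonneg (by positivity) (sub_nonneg.2 (hpow _ (by linarith)))
  · exact mul_nonneg (by positivity) (sub_nonneg.2 (hpow _ (by linarith)))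
  · exact mul_nonneg (by positivity) (Real.log_nonneg hx)

lemma Dfun_le (N : ℕ) (k : ℝ) {x : Euc N} {ρ : ℝ} (hx : 1 ≤ ‖x‖) (hxρ : ‖x‖ ≤ ρ) :
    Dfun N k x ≤ logCorrection N k ρ * ‖x‖ ^ max k (2 - N) := by
  have hpow (e : ℝ) : 0 ≤ ‖x‖ ^ e := by positivity
  unfold Dfun logCorrection
  rcases lt_trichotomy k (2 - N) with hk | rfl | hk
  · rw [if_neg hk.not_gt, if_pos hk, if_neg hk.ne, max_eq_right hk.le, one_mul]
    nlinarith [hpow (2 - N), hpow (k - 2 + N), mul_nonneg (hpow (2 - N)) (hpow (k - 2 + N))]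
  · simp only [lt_irrefl, if_false, if_true, max_self]
    rw [mul_comm]
    exact mul_le_mul_of_nonneg_right (Real.log_le_log (by linarith) hxρ) (hpow _)
  · rw [if_pos hk, if_neg hk.ne', max_eq_left hk.le, one_mul]
    nlinarith [mul_nonneg (hpow k) (hpow (2 - N - k))]

lemma logCorrection_mul_le_Aweight (N : ℕ) (k σ p : ℝ) {R : ℝ} (hR : 2 ≤ R) :
    logCorrection N k (2 * R) *
        (Real.log (2 * R) + (2 * R) ^ (N + max k (2 - N) - σ / (p - 1))) ≤
      2 * (2 + 2 ^ (N + max k (2 - N) - σ / (p - 1))) * Aweight N k σ p R := by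
  set β := (N : ℝ) + max k (2 - N) - σ / (p - 1)
  have hlog2 : Real.log 2 ≤ Real.log R := Real.log_le_log two_pos hR
  have hlog : Real.log (2 * R) ≤ 2 * Real.log R := by
    rw [Real.log_mul two_ne_zero (by linarith)]
    linarith
  have hL : logCorrection N k (2 * R) ≤ 2 * logCorrection N k R := by
    unfold logCorrection
    split_ifs
    exacts [hlog, by norm_num]
  have h2β : 0 ≤ (2 : ℝ) ^ β := by positivity
  have hRβ : 0 ≤ R ^ β := by positivity
  have hsum : Real.log (2 * R) + (2 * R) ^ β ≤ (2 + 2 ^ β) * (Real.log R + R ^ β) := by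
    rw [Real.mul_rpow zero_le_two (by linarith)]
    nlinarith [Real.log_nonneg (show 1 ≤ 2 by norm_num)]
  rw [Aweight_eq]
  calc logCorrection N k (2 * R) * (Real.log (2 * R) + (2 * R) ^ β)
      ≤ (2 * logCorrection N k R) * ((2 + 2 ^ β) * (Real.log R + R ^ β)) :=
        mul_le_mul hL hsum (add_nonneg (Real.log_nonneg (show (1 : ℝ) ≤ 2 * R by linarith))
          (by positivity)) (by linarith [logCorrection_nonneg N k (show (1 : ℝ) ≤ R by linarith)])
    _ = _ := by ring

lemma mem_extDom {N : ℕ} {x : Euc N} : x ∈ extDom N ↔ 1 ≤ ‖x‖ := by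
  simp [extDom]

lemma exists_lintegral_extDom_le_Aweight {N : ℕ} [NeZero N] (k σ p : ℝ) :
    ∃ C, 0 ≤ C ∧ ∀ R, 2 ≤ R → ∀ F : Euc N → ℝ, (∀ x, 1 ≤ ‖x‖ → F x ≤ Dfun N k x) →
      (∀ x, 2 * R ≤ ‖x‖ → F x = 0) →
      ∫⁻ x in extDom N, ENNReal.ofReal (‖x‖ ^ (-σ / (p - 1)) * F x) ≤
        ENNReal.ofReal (C * Aweight N k σ p R) := by
  set β := (N : ℝ) + max k (2 - N) - σ / (p - 1) with hβ
  set C₀ := N * volume.real (ball (0 : Euc N) 1) * (1 + |β|⁻¹)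
  have hC₀ : 0 ≤ C₀ := by positivity
  refine ⟨C₀ * (2 * (2 + 2 ^ β)), by positivity, fun R hR F hF hF0 => ?_⟩
  set L := logCorrection N k (2 * R)
  have hρ : Real.exp 1 ≤ 2 * R :=
    (Real.exp_one_lt_d9.le.trans (by norm_num : (2.7182818286 : ℝ) ≤ 4)).trans (by linarith)
  have hL : 0 ≤ L := logCorrection_nonneg N k (by linarith)
  have hpt : ∀ x ∈ extDom N, ENNReal.ofReal (‖x‖ ^ (-σ / (p - 1)) * F x) ≤
      ENNReal.ofReal L * ENNReal.ofReal ((Ico 1 (2 * R)).indicator (· ^ (β - N)) ‖x‖) := by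
    intro x hx
    rw [mem_extDom] at hx
    rcases lt_or_ge ‖x‖ (2 * R) with hxR | hxR
    · rw [← ENNReal.ofReal_mul hL, indicator_of_mem (show ‖x‖ ∈ Ico 1 (2 * R) from ⟨hx, hxR⟩)]
      refine ENNReal.ofReal_le_ofReal ?_
      calc ‖x‖ ^ (-σ / (p - 1)) * F x
          ≤ ‖x‖ ^ (-σ / (p - 1)) * (L * ‖x‖ ^ max k (2 - N)) := by
            gcongr
            exact (hF x hx).trans (Dfun_le N k hx hxR.le)
        _ = L * ‖x‖ ^ (β - N) := by
            rw [mul_left_comm, ← Real.rpow_add (by linarith), hβ]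
            ring_nf
    · simp [hF0 x hxR]
  calc ∫⁻ x in extDom N, ENNReal.ofReal (‖x‖ ^ (-σ / (p - 1)) * F x)
      ≤ ∫⁻ x in extDom N,
          ENNReal.ofReal L * ENNReal.ofReal ((Ico 1 (2 * R)).indicator (· ^ (β - N)) ‖x‖) :=
        setLIntegral_mono' (measurableSet_ball.compl) hpt
    _ ≤ ∫⁻ x, ENNReal.ofReal L * ENNReal.ofReal ((Ico 1 (2 * R)).indicator (· ^ (β - N)) ‖x‖) :=
        setLIntegral_le_lintegral _ _
    _ = ENNReal.ofReal L * ∫⁻ x, ENNReal.ofReal ((Ico 1 (2 * R)).indicator (· ^ (β - N)) ‖x‖) :=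
        lintegral_const_mul' _ _ ENNReal.ofReal_ne_top
    _ ≤ ENNReal.ofReal L * ENNReal.ofReal (C₀ * (Real.log (2 * R) + (2 * R) ^ β)) := by
        gcongr
        simpa [finrank_euclideanSpace_fin, C₀] using
          lintegral_indicator_rpow_norm_le (volume : Measure (Euc N)) (γ := β - N) hρ
    _ = ENNReal.ofReal (C₀ * (L * (Real.log (2 * R) + (2 * R) ^ β))) := by
        rw [← ENNReal.ofReal_mul hL]
        congr 1
        ring
    _ ≤ ENNReal.ofReal (C₀ * (2 * (2 + 2 ^ β)) * Aweight N k σ p R) := by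
        rw [mul_assoc C₀]
        exact ENNReal.ofReal_le_ofReal
          (mul_le_mul_of_nonneg_left (logCorrection_mul_le_Aweight N k σ p hR) hC₀)

lemma IsZeta.exists_bound {ζ : ℝ → ℝ} (hζ : IsZeta ζ) (a e d : ℝ) (he : 0 < e) (hd : 0 ≤ d) :
    ∃ K, 0 ≤ K ∧ ∀ s, s ^ a * ζ s ^ e * |deriv ζ s| ^ d ≤ K := by
  have hcpt : IsCompact (tsupport ζ) :=
    isCompact_of_isClosed_isBounded (isClosed_tsupport ζ) ((isBounded_Ioo 0 1).subset hζ.supp)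
  -- `s ^ a` is continuous only away from `0`, and `tsupport ζ ⊆ (0, 1)` avoids `0`.
  have hcont : ContinuousOn (fun s => s ^ a * ζ s ^ e * |deriv ζ s| ^ d) (tsupport ζ) := by
    have hζ' : Continuous (deriv ζ) := hζ.smooth.continuous_deriv (by exact_mod_cast le_top)
    refine ((continuousOn_id.rpow_const fun s hs => Or.inl (hζ.supp hs).1.ne').mul ?_).mul ?_
    · exact (hζ.smooth.continuous.rpow_const fun _ => Or.inr he.le).continuousOn
    · exact ((continuous_abs.comp hζ').rpow_const fun _ => Or.inr hd).continuousOn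
  obtain ⟨K, hK⟩ := hcpt.exists_bound_of_continuousOn hcont
  refine ⟨max K 0, le_max_right _ _, fun s => ?_⟩
  by_cases hs : s ∈ tsupport ζ
  · exact (le_abs_self _).trans ((hK s hs).trans (le_max_left _ _))
  · rw [image_eq_zero_of_notMem_tsupport hs, Real.zero_rpow he.ne', mul_zero, zero_mul]
    exact le_max_right _ _

lemma iota_time_weight_eq {ζ : ℝ → ℝ} (hζ : Differentiable ℝ ζ) {a c d ℓ T t : ℝ}
    (hcd : c + d = 1) (hℓ : 0 ≤ ℓ) (hT : 0 < T) (ht : 0 < t) (hZ : 0 < ζ (t / T)) :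
    t ^ a * iota ζ T ℓ t ^ c * |deriv (iota ζ T ℓ) t| ^ d =
      ℓ ^ d * T ^ (a - d) * ((t / T) ^ a * ζ (t / T) ^ (ℓ - d) * |deriv ζ (t / T)| ^ d) := by
  set Z := ζ (t / T)
  set W := deriv ζ (t / T)
  have hderiv : HasDerivAt (iota ζ T ℓ) (W * (1 / T) * ℓ * Z ^ (ℓ - 1)) t :=
    ((hζ _).hasDerivAt.comp t ((hasDerivAt_id t).div_const T)).rpow_const (Or.inl hZ.ne')
  have h₁ : iota ζ T ℓ t ^ c = Z ^ (ℓ * c) := (Real.rpow_mul hZ.le ℓ c).symm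
  have h₂ : |deriv (iota ζ T ℓ) t| ^ d = |W| ^ d * T ^ (-d) * ℓ ^ d * Z ^ ((ℓ - 1) * d) := by
    rw [hderiv.deriv, abs_mul, abs_mul, abs_mul, abs_of_pos (by positivity : 0 < 1 / T),
      abs_of_nonneg hℓ, abs_of_pos (by positivity : 0 < Z ^ (ℓ - 1)),
      Real.mul_rpow (by positivity) (by positivity), Real.mul_rpow (by positivity) hℓ,
      Real.mul_rpow (abs_nonneg W) (by positivity), one_div, Real.inv_rpow hT.le,
      ← Real.rpow_neg hT.le, ← Real.rpow_mul hZ.le]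
  have h₃ : Z ^ (ℓ * c) * Z ^ ((ℓ - 1) * d) = Z ^ (ℓ - d) := by
    rw [← Real.rpow_add hZ]
    congr 1
    linear_combination ℓ * hcd
  have h₄ : t ^ a = T ^ a * (t / T) ^ a := by
    rw [Real.div_rpow ht.le hT.le, mul_div_cancel₀ _ (by positivity)]
  have h₅ : T ^ a * T ^ (-d) = T ^ (a - d) := by rw [← Real.rpow_add hT, sub_eq_add_neg]
  rw [h₁, h₂, h₄, ← h₃, ← h₅]
  ring

lemma exists_lintegral_iota_time_weight_le {ζ : ℝ → ℝ} (hζ : IsZeta ζ) {a c d ℓ : ℝ}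
    (hcd : c + d = 1) (hc : c ≠ 0) (hd : 0 ≤ d) (hℓ : d < ℓ) :
    ∃ K, 0 ≤ K ∧ ∀ T, 0 < T →
      ∫⁻ t in Ioi 0, ENNReal.ofReal (t ^ a * iota ζ T ℓ t ^ c * |deriv (iota ζ T ℓ) t| ^ d) ≤
        ENNReal.ofReal (K * T ^ (a - d + 1)) := by
  obtain ⟨K, hK0, hK⟩ := hζ.exists_bound a (ℓ - d) d (by linarith) hd
  have hℓ0 : 0 < ℓ := by linarith
  refine ⟨ℓ ^ d * K, by positivity, fun T hT => ?_⟩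
  set M := ℓ ^ d * T ^ (a - d) * K
  have hpt : ∀ t ∈ Ioi (0 : ℝ),
      ENNReal.ofReal (t ^ a * iota ζ T ℓ t ^ c * |deriv (iota ζ T ℓ) t| ^ d) ≤
        (Iio T).indicator (fun _ => ENNReal.ofReal M) t := by
    intro t ht
    rcases (hζ.nonneg (t / T)).eq_or_lt with hZ | hZ
    · rw [iota, ← hZ, Real.zero_rpow hℓ0.ne', Real.zero_rpow hc, mul_zero, zero_mul,
        ENNReal.ofReal_zero]
      exact bot_le
    · have htT : t < T := by
        have := (hζ.supp (subset_tsupport ζ hZ.ne')).2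
        rwa [div_lt_one hT] at this
      rw [indicator_of_mem (show t ∈ Iio T from htT),
        iota_time_weight_eq (hζ.smooth.differentiable (by simp)) hcd hℓ0.le hT ht hZ]
      exact ENNReal.ofReal_le_ofReal (mul_le_mul_of_nonneg_left (hK _) (by positivity))
  calc ∫⁻ t in Ioi 0, ENNReal.ofReal (t ^ a * iota ζ T ℓ t ^ c * |deriv (iota ζ T ℓ) t| ^ d)
      ≤ ∫⁻ t in Ioi 0, (Iio T).indicator (fun _ => ENNReal.ofReal M) t :=
        setLIntegral_mono' measurableSet_Ioi hpt
    _ = ENNReal.ofReal (M * T) := by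
        rw [lintegral_indicator measurableSet_Iio, setLIntegral_const,
          Measure.restrict_apply measurableSet_Iio, Iio_inter_Ioi, Real.volume_Ioo, sub_zero,
          ← ENNReal.ofReal_mul (by positivity)]
    _ = ENNReal.ofReal (ℓ ^ d * K * T ^ (a - d + 1)) := by
        rw [Real.rpow_add_one hT.ne']
        congr 1
        ring

lemma I1_mul_eq {N : ℕ} {α σ p : ℝ} (hp : 1 < p) {ι : ℝ → ℝ} {F : Euc N → ℝ}
    (hι : Measurable ι) (hF : Measurable F) (hι0 : ∀ t, 0 ≤ ι t)
    (hF0 : ∀ x ∈ extDom N, 0 ≤ F x) :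
    I1 N α σ p (fun z => ι z.1 * F z.2) =
      (∫⁻ t in Ioi 0, ENNReal.ofReal
          (t ^ (-α / (p - 1)) * ι t ^ (-1 / (p - 1)) * |deriv ι t| ^ (p / (p - 1)))) *
        ∫⁻ x in extDom N, ENNReal.ofReal (‖x‖ ^ (-σ / (p - 1)) * F x) := by
  rw [I1]
  set a := -α / (p - 1)
  set b := -σ / (p - 1)
  set c := -1 / (p - 1)
  set d := p / (p - 1)
  have hcd : c + d = 1 := by
    simp only [c, d]
    field_simp [(by linarith : p - 1 ≠ 0)]
    ring
  have hpt : ∀ z ∈ OmegaSet N,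
      ENNReal.ofReal (z.1 ^ a * ‖z.2‖ ^ b * (ι z.1 * F z.2) ^ c *
          |dtD (fun z => ι z.1 * F z.2) z| ^ d) =
        ENNReal.ofReal (z.1 ^ a * ι z.1 ^ c * |deriv ι z.1| ^ d) *
          ENNReal.ofReal (‖z.2‖ ^ b * F z.2) := by
    rintro ⟨t, x⟩ ⟨ht, hx⟩
    have hFx := hF0 x hx
    have hFF : F x ^ c * F x ^ d = F x := by
      rw [← Real.rpow_add' hFx (by rw [hcd]; exact one_ne_zero), hcd, Real.rpow_one]
    rw [← ENNReal.ofReal_mul (mul_nonneg (mul_nonneg (Real.rpow_nonneg (le_of_lt ht) _)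
      (Real.rpow_nonneg (hι0 t) _)) (by positivity))]
    congr 1
    simp only [dtD, deriv_mul_const_field]
    rw [Real.mul_rpow (hι0 t) hFx, abs_mul, abs_of_nonneg hFx, Real.mul_rpow (abs_nonneg _) hFx]
    linear_combination (t ^ a * ι t ^ c * |deriv ι t| ^ d * ‖x‖ ^ b) * hFF
  rw [setLIntegral_congr_fun (show MeasurableSet (OmegaSet N) from
      measurableSet_Ioi.prod measurableSet_ball.compl) hpt, OmegaSet, Measure.volume_eq_prod,
    ← Measure.prod_restrict]
  exact lintegral_prod_mul (f := fun t => ENNReal.ofReal (t ^ a * ι t ^ c * |deriv ι t| ^ d))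
    (g := fun x => ENNReal.ofReal (‖x‖ ^ b * F x)) (by fun_prop) (by fun_prop)

lemma measurable_Dfun (N : ℕ) (k : ℝ) : Measurable (Dfun N k) := by
  unfold Dfun
  split_ifs <;> fun_prop

lemma Aweight_nonneg (N : ℕ) (k σ p : ℝ) {R : ℝ} (hR : 1 ≤ R) : 0 ≤ Aweight N k σ p R := by
  rw [Aweight_eq]
  exact mul_nonneg (logCorrection_nonneg N k hR)
    (add_nonneg (Real.log_nonneg hR) (by positivity))

lemma exists_I1_iota_Dfun_mul_cutoff_le {N : ℕ} [NeZero N] {k α σ p : ℝ} (hp : 1 < p)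
    {ζ : ℝ → ℝ} (hζ : IsZeta ζ) :
    ∃ ℓ₀ : ℝ, ∀ ℓ : ℝ, ℓ₀ ≤ ℓ → ∃ C : ℝ, 0 < C ∧
      ∀ T : ℝ, 0 < T → ∀ R : ℝ, 2 ≤ R → ∀ χ : Euc N → ℝ, Measurable χ →
        (∀ x, χ x ∈ Icc (0 : ℝ) 1) → support χ ⊆ ball 0 (2 * R) →
        I1 N α σ p (fun z => iota ζ T ℓ z.1 * (Dfun N k z.2 * χ z.2 ^ ℓ)) ≤
          ENNReal.ofReal (C * T ^ (1 - (α + p) / (p - 1)) * Aweight N k σ p R) := by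
  have hq : 0 < p - 1 := by linarith
  have hcd : -1 / (p - 1) + p / (p - 1) = 1 := by
    field_simp
    ring
  refine ⟨p / (p - 1) + 1, fun ℓ hℓ => ?_⟩
  have hdℓ : p / (p - 1) < ℓ := (lt_add_one _).trans_le hℓ
  obtain ⟨K, hK0, hK⟩ := exists_lintegral_iota_time_weight_le hζ (a := -α / (p - 1)) hcd
    (div_neg_of_neg_of_pos (by norm_num) hq).ne (by positivity) hdℓ
  replace hℓ : 0 < ℓ := lt_of_le_of_lt (by positivity) hdℓ
  obtain ⟨C, hC0, hC⟩ := exists_lintegral_extDom_le_Aweight (N := N) k σ p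
  refine ⟨K * C + 1, by positivity, fun T hT R hR χ hχm hχ hχR => ?_⟩
  have hιm : Measurable (iota ζ T ℓ) :=
    (hζ.smooth.continuous.measurable.comp (measurable_id.div_const T)).pow_const ℓ
  have hFle : ∀ x, 1 ≤ ‖x‖ → Dfun N k x * χ x ^ ℓ ≤ Dfun N k x := fun x hx =>
    mul_le_of_le_one_right (Dfun_nonneg N k hx) (Real.rpow_le_one (hχ x).1 (hχ x).2 hℓ.le)
  have hF0 : ∀ x : Euc N, 2 * R ≤ ‖x‖ → Dfun N k x * χ x ^ ℓ = 0 := by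
    intro x hx
    rw [notMem_support.1 fun hsupp => (mem_ball_zero_iff.1 (hχR hsupp)).not_ge hx,
      Real.zero_rpow hℓ.ne', mul_zero]
  rw [I1_mul_eq (F := fun x => Dfun N k x * χ x ^ ℓ) hp hιm
    ((measurable_Dfun N k).mul (hχm.pow_const ℓ))
    (fun t => Real.rpow_nonneg (hζ.nonneg _) ℓ)
    (fun x hx => mul_nonneg (Dfun_nonneg N k (mem_extDom.1 hx)) (Real.rpow_nonneg (hχ x).1 ℓ))]
  have hTA : 0 ≤ T ^ (1 - (α + p) / (p - 1)) * Aweight N k σ p R :=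
    mul_nonneg (by positivity) (Aweight_nonneg N k σ p (by linarith))
  calc _ ≤ ENNReal.ofReal (K * T ^ (-α / (p - 1) - p / (p - 1) + 1)) *
          ENNReal.ofReal (C * Aweight N k σ p R) :=
        mul_le_mul' (hK T hT) (hC R hR _ hFle hF0)
    _ = ENNReal.ofReal (K * C * (T ^ (1 - (α + p) / (p - 1)) * Aweight N k σ p R)) := by
        rw [← ENNReal.ofReal_mul (by positivity), show -α / (p - 1) - p / (p - 1) + 1 =
          1 - (α + p) / (p - 1) by ring]
        ring_nf
    _ ≤ ENNReal.ofReal ((K * C + 1) * T ^ (1 - (α + p) / (p - 1)) * Aweight N k σ p R) := by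
        rw [mul_assoc (K * C + 1)]
        exact ENNReal.ofReal_le_ofReal (mul_le_mul_of_nonneg_right (by linarith) hTA)

theorem I1_estimate_dirichlet_test_functions_general (N : ℕ) (hN : 2 ≤ N) (k α σ p : ℝ)
    (hp : 1 < p)
    (ζ : ℝ → ℝ) (hζ : IsZeta ζ)
    (ξ : ℝ → Euc N → ℝ) (hξ : IsXiFamily N ξ)
    (η : ℝ → Euc N → ℝ) (hη : IsEtaFamily N η) :
    ∃ ℓ₀ : ℝ, ∀ ℓ : ℝ, ℓ₀ ≤ ℓ → ∃ C : ℝ, 0 < C ∧ ∃ T₀ R₀ : ℝ,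
      ∀ T : ℝ, T₀ ≤ T → ∀ R : ℝ, R₀ ≤ R →
        I1 N α σ p (fun z => iota ζ T ℓ z.1 * (Dfun N k z.2 * ξ R z.2 ^ ℓ))
          ≤ ENNReal.ofReal (C * T ^ (1 - (α + p) / (p - 1)) * Aweight N k σ p R) ∧
        I1 N α σ p (fun z => iota ζ T ℓ z.1 * (Dfun N k z.2 * η R z.2 ^ ℓ))
          ≤ ENNReal.ofReal (C * T ^ (1 - (α + p) / (p - 1)) * Aweight N k σ p R) := by
  have : NeZero N := ⟨by omega⟩
  obtain ⟨ℓ₀, hℓ₀⟩ := exists_I1_iota_Dfun_mul_cutoff_le (N := N) (k := k) (α := α) (σ := σ) hp hζ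
  refine ⟨ℓ₀, fun ℓ hℓ => ?_⟩
  obtain ⟨C, hC, hbound⟩ := hℓ₀ ℓ hℓ
  refine ⟨C, hC, 1, 2, fun T hT R hR => ⟨?_, ?_⟩⟩
  · exact hbound T (by linarith) R hR (ξ R) (hξ.smooth R).continuous.measurable (hξ.mem_Icc R)
      (hξ.supp R (by linarith))
  · exact hbound T (by linarith) R hR (η R) (hη.smooth R).continuous.measurable (hη.mem_Icc R)
      ((hη.supp R (by linarith)).trans (ball_subset_ball (by linarith)))

/-- **Lemma 2.9**: for `μ = ψ` or `μ = ψ*`, where `ψ(t,x) = ι(t) 𝒟(x) ξ_R(x)^ℓ` and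
`ψ*(t,x) = ι(t) 𝒟(x) η_R(x)^ℓ`, for all sufficiently large `ℓ` there is `C > 0`
independent of `T, R` such that, for all sufficiently large `T` and `R`,
`I₁(μ) ≤ C T^{1−(α+p)/(p−1)} A(R)`. -/
theorem I1_estimate_dirichlet_test_functions (N : ℕ) (hN : 2 ≤ N) (k α σ p : ℝ)
    (hα : -1 ≤ α) (hp : 1 < p)
    (ζ : ℝ → ℝ) (hζ : IsZeta ζ)
    (ξ : ℝ → Euc N → ℝ) (hξ : IsXiFamily N ξ)
    (η : ℝ → Euc N → ℝ) (hη : IsEtaFamily N η) :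
    ∃ ℓ₀ : ℝ, ∀ ℓ : ℝ, ℓ₀ ≤ ℓ → ∃ C : ℝ, 0 < C ∧ ∃ T₀ R₀ : ℝ,
      ∀ T : ℝ, T₀ ≤ T → ∀ R : ℝ, R₀ ≤ R →
        I1 N α σ p (fun z => iota ζ T ℓ z.1 * (Dfun N k z.2 * ξ R z.2 ^ ℓ))
          ≤ ENNReal.ofReal (C * T ^ (1 - (α + p) / (p - 1)) * Aweight N k σ p R) ∧
        I1 N α σ p (fun z => iota ζ T ℓ z.1 * (Dfun N k z.2 * η R z.2 ^ ℓ))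
          ≤ ENNReal.ofReal (C * T ^ (1 - (α + p) / (p - 1)) * Aweight N k σ p R) :=
  I1_estimate_dirichlet_test_functions_general N hN k α σ p hp ζ hζ ξ hξ η hη
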